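/- arXiv:2403.03844 — 5 statements merged into one kernel-verified Lean document; each statement's English description precedes it below -/
import Mathlib

section
/- Let A be a real symmetric positive semidefinite N×N matrix, τ > 0, u_0 ∈ ℝ^{N×k}, and u_j = cos(jτ√A) u_0. Define the data matrices D_j = u_0ᵀ u_j ∈ ℝ^{k×k}. Then the Gramian (mass matrix) blocks M_{j,l} = u_jᵀ u_l satisfy M_{j,l} = (1/2)(D_{j+l} + D_{|j-l|}) for all j, l ≥ 0. -/
open Matrix Real

/-! Writing `F t = cos(t√A) = Q diag(cos(t √θᵢ)) Qᵀ`, the family `F` is symmetric, even, and obeys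
d'Alembert's law `F s F t = (F (s + t) + F (s - t)) / 2`, inherited entrywise from the
product-to-sum formula for `cos` because `Qᵀ Q = 1`. Hence
`u_jᵀ u_l = u₀ᵀ F(jτ) F(lτ) u₀ = (u₀ᵀ F((j + l)τ) u₀ + u₀ᵀ F((j - l)τ) u₀) / 2`,
and evenness replaces `(j - l)τ` by `|j - l| τ`. -/

theorem Function.Even.apply_natAbs_sub_mul {β : Type*} {F : ℝ → β} (hF : Function.Even F)
    (j l : ℕ) (τ : ℝ) : F (((j : ℤ) - l).natAbs * τ) = F (j * τ - l * τ) := by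
  have habs : ((((j : ℤ) - l).natAbs : ℕ) : ℝ) = |(j : ℝ) - l| := by
    push_cast [Nat.cast_natAbs]
    rfl
  rw [habs]
  rcases abs_choice ((j : ℝ) - l) with h | h
  · rw [h, sub_mul]
  · rw [h, ← hF, neg_mul, neg_neg, sub_mul]

section CosineLaw

variable {n m : Type*} [Fintype n]

theorem transpose_mul_mul_of_cos_law (F : ℝ → Matrix n n ℝ) (hsymm : ∀ t, (F t)ᵀ = F t)
    (hmul : ∀ s t, F s * F t = (1 / 2 : ℝ) • (F (s + t) + F (s - t)))
    (u₀ : Matrix n m ℝ) (s t : ℝ) :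
    (F s * u₀)ᵀ * (F t * u₀) =
      (1 / 2 : ℝ) • (u₀ᵀ * (F (s + t) * u₀) + u₀ᵀ * (F (s - t) * u₀)) := by
  calc (F s * u₀)ᵀ * (F t * u₀) = u₀ᵀ * (F s * F t) * u₀ := by
        rw [transpose_mul, hsymm, Matrix.mul_assoc, Matrix.mul_assoc, Matrix.mul_assoc]
    _ = _ := by
        rw [hmul, Matrix.mul_smul, Matrix.smul_mul, Matrix.mul_add, Matrix.add_mul,
          Matrix.mul_assoc, Matrix.mul_assoc]

theorem transpose_mul_diagonal_mul_transpose {R : Type*} [CommSemiring R] [DecidableEq n]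
    (Q : Matrix n n R) (d : n → R) : (Q * diagonal d * Qᵀ)ᵀ = Q * diagonal d * Qᵀ := by
  rw [transpose_mul, transpose_mul, transpose_transpose, diagonal_transpose, Matrix.mul_assoc]

theorem mul_mul_transpose_mul_mul_mul_transpose {R : Type*} [CommSemiring R] [DecidableEq n]
    {Q : Matrix n n R} (hQ : Qᵀ * Q = 1) (X Y : Matrix n n R) :
    Q * X * Qᵀ * (Q * Y * Qᵀ) = Q * (X * Y) * Qᵀ := by
  simp only [Matrix.mul_assoc]
  rw [← Matrix.mul_assoc Qᵀ Q, hQ, Matrix.one_mul]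

theorem diagonal_cos_mul_diagonal_cos [DecidableEq n] (ω : n → ℝ) (s t : ℝ) :
    diagonal (fun i => cos (s * ω i)) * diagonal (fun i => cos (t * ω i)) =
      (1 / 2 : ℝ) • (diagonal (fun i => cos ((s + t) * ω i)) +
        diagonal (fun i => cos ((s - t) * ω i))) := by
  rw [diagonal_mul_diagonal, diagonal_add, ← diagonal_smul]
  congr 1
  funext i
  simp only [Pi.smul_apply, smul_eq_mul, add_mul, sub_mul, cos_add, cos_sub]
  ring

end CosineLaw

theorem stmt_3_general {n : Type*} [Fintype n] [DecidableEq n] {k : ℕ}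
    (Q : Matrix n n ℝ) (θ : n → ℝ)
    (hQ' : Qᵀ * Q = 1)
    (F : ℝ → Matrix n n ℝ)
    (hF : ∀ t, F t = Q * Matrix.diagonal (fun i => Real.cos (t * Real.sqrt (θ i))) * Qᵀ)
    (τ : ℝ)
    (u0 : Matrix n (Fin k) ℝ) (u : ℕ → Matrix n (Fin k) ℝ)
    (hu : ∀ j : ℕ, u j = F (j * τ) * u0)
    (D : ℕ → Matrix (Fin k) (Fin k) ℝ)
    (hD : ∀ j : ℕ, D j = u0ᵀ * u j) :
    ∀ j l : ℕ, (u j)ᵀ * u l =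
      (1 / 2 : ℝ) • (D (j + l) + D (((j : ℤ) - l).natAbs)) := by
  have hsymm : ∀ t, (F t)ᵀ = F t := fun t => by
    rw [hF, transpose_mul_diagonal_mul_transpose]
  have heven : Function.Even F := fun t => by
    simp only [hF, neg_mul, cos_neg]
  have hmul : ∀ s t, F s * F t = (1 / 2 : ℝ) • (F (s + t) + F (s - t)) := fun s t => by
    simp only [hF]
    rw [mul_mul_transpose_mul_mul_mul_transpose hQ', diagonal_cos_mul_diagonal_cos,
      Matrix.mul_smul, Matrix.smul_mul, Matrix.mul_add, Matrix.add_mul]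
  intro j l
  simp only [hD, hu]
  rw [transpose_mul_mul_of_cos_law F hsymm hmul, heven.apply_natAbs_sub_mul, Nat.cast_add,
    add_mul]

/-- The Gramian (mass matrix) blocks `M_{j,l} = u_jᵀ u_l` of the snapshots
`u_j = cos(jτ√A) u_0` are determined by the data matrices `D_j = u_0ᵀ u_j`:
`M_{j,l} = (1/2)(D_{j+l} + D_{|j-l|})`. -/
theorem stmt_3 {n : Type*} [Fintype n] [DecidableEq n] {k : ℕ}
    (A Q : Matrix n n ℝ) (θ : n → ℝ)
    (hQ : Q * Qᵀ = 1) (hQ' : Qᵀ * Q = 1)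
    (hθ : ∀ i, 0 ≤ θ i)
    (hA : A = Q * Matrix.diagonal θ * Qᵀ)
    (hApsd : A.PosSemidef)
    (F : ℝ → Matrix n n ℝ)
    (hF : ∀ t, F t = Q * Matrix.diagonal (fun i => Real.cos (t * Real.sqrt (θ i))) * Qᵀ)
    (τ : ℝ) (hτ : 0 < τ)
    (u0 : Matrix n (Fin k) ℝ) (u : ℕ → Matrix n (Fin k) ℝ)
    (hu : ∀ j : ℕ, u j = F (j * τ) * u0)
    (D : ℕ → Matrix (Fin k) (Fin k) ℝ)
    (hD : ∀ j : ℕ, D j = u0ᵀ * u j) :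
    ∀ j l : ℕ, (u j)ᵀ * u l =
      (1 / 2 : ℝ) • (D (j + l) + D (((j : ℤ) - l).natAbs)) :=
  stmt_3_general Q θ hQ' F hF τ u0 u hu D hD
end

section
/- Let A be a real symmetric positive semidefinite N×N matrix, τ > 0, u_0 ∈ ℝ^{N×k}, u_j = cos(jτ√A) u_0, P = cos(τ√A), and D_j = u_0ᵀ u_j. Then the stiffness matrix blocks S_{j,l} = u_jᵀ P u_l satisfy S_{j,l} = (1/4)(D_{j+l+1} + D_{|j-l-1|} + D_{j+l-1} + D_{|j-l+1|}) for all j ≥ 0 and l ≥ 1. -/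
/-!
Conjugating by `Q` diagonalises every `cos(t√A)` simultaneously, so the product-to-sum formula
`cos s · cos t = (cos (s + t) + cos (s - t)) / 2` holds for these matrix functions. It gives the
three-term recursion `P u_l = (u_{l+1} + u_{l-1}) / 2` and, together with the symmetry and evenness
of `cos(t√A)`, the Gram identity `u_jᵀ u_l = (D_{j+l} + D_{|j-l|}) / 2`; substituting the first into
the second yields the formula for `S_{j,l}`.
-/

open Matrix

noncomputable section

namespace Matrix

variable {n : Type*} [Fintype n] [DecidableEq n]

/-- `cosConj Q ω t = Q · diag(cos (t ωᵢ)) · Qᵀ`, i.e. `cos(t√A)` for `A = Q · diag(ωᵢ²) · Qᵀ`. -/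
def cosConj (Q : Matrix n n ℝ) (ω : n → ℝ) (t : ℝ) : Matrix n n ℝ :=
  Q * diagonal (fun i => Real.cos (t * ω i)) * Qᵀ

variable (Q : Matrix n n ℝ) (ω : n → ℝ)

theorem transpose_cosConj (t : ℝ) : (cosConj Q ω t)ᵀ = cosConj Q ω t := by
  simp [cosConj, transpose_mul, Matrix.mul_assoc]

theorem cosConj_neg (t : ℝ) : cosConj Q ω (-t) = cosConj Q ω t := by
  simp [cosConj, neg_mul, Real.cos_neg]

theorem cosConj_natAbs_mul (z : ℤ) (τ : ℝ) :
    cosConj Q ω ((z.natAbs : ℝ) * τ) = cosConj Q ω (z * τ) := by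
  rw [Nat.cast_natAbs, Int.cast_abs]
  rcases abs_choice (z : ℝ) with h | h <;> simp [h, neg_mul, cosConj_neg]

theorem cosConj_mul_cosConj (hQ : Qᵀ * Q = 1) (s t : ℝ) :
    cosConj Q ω s * cosConj Q ω t =
      (1 / 2 : ℝ) • (cosConj Q ω (s + t) + cosConj Q ω (s - t)) := by
  have hcos : (fun i => Real.cos (s * ω i) * Real.cos (t * ω i)) =
      (1 / 2 : ℝ) • fun i => Real.cos ((s + t) * ω i) + Real.cos ((s - t) * ω i) := by
    funext i
    rw [Pi.smul_apply, smul_eq_mul, add_mul, sub_mul, Real.cos_add, Real.cos_sub]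
    ring
  calc cosConj Q ω s * cosConj Q ω t
      = Q * (diagonal (fun i => Real.cos (s * ω i)) * (Qᵀ * Q) *
          diagonal (fun i => Real.cos (t * ω i))) * Qᵀ := by
        simp only [cosConj, Matrix.mul_assoc]
    _ = _ := by
        rw [hQ, Matrix.mul_one, diagonal_mul_diagonal, hcos, diagonal_smul, ← diagonal_add,
          Matrix.mul_smul, Matrix.smul_mul, Matrix.mul_add, Matrix.add_mul]
        rfl

variable {Q ω} {k : ℕ} {τ : ℝ} {u0 : Matrix n (Fin k) ℝ} {u : ℕ → Matrix n (Fin k) ℝ}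

theorem cosConj_mul_snapshot (hQ : Qᵀ * Q = 1) (hu : ∀ j : ℕ, u j = cosConj Q ω (j * τ) * u0)
    {l : ℕ} (hl : 1 ≤ l) :
    cosConj Q ω τ * u l = (1 / 2 : ℝ) • (u (l + 1) + u (l - 1)) := by
  have hsub : τ - l * τ = -(((l - 1 : ℕ) : ℝ) * τ) := by
    rw [Nat.cast_sub hl]
    ring
  rw [hu, hu, hu, ← Matrix.mul_assoc, cosConj_mul_cosConj Q ω hQ, hsub, cosConj_neg,
    Matrix.smul_mul, Matrix.add_mul]
  push_cast
  ring_nf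

theorem snapshot_transpose_mul_snapshot (hQ : Qᵀ * Q = 1)
    (hu : ∀ j : ℕ, u j = cosConj Q ω (j * τ) * u0) (j l : ℕ) :
    (u j)ᵀ * u l =
      (1 / 2 : ℝ) • (u0ᵀ * u (j + l) + u0ᵀ * u ((j : ℤ) - l).natAbs) := by
  rw [hu, hu, hu, hu, cosConj_natAbs_mul, transpose_mul, transpose_cosConj, Matrix.mul_assoc,
    ← Matrix.mul_assoc (cosConj Q ω _), cosConj_mul_cosConj Q ω hQ, Matrix.smul_mul,
    Matrix.mul_smul, Matrix.add_mul, Matrix.mul_add]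
  push_cast
  simp only [add_mul, sub_mul]

end Matrix

end

theorem stmt_4_general {n : Type*} [Fintype n] [DecidableEq n] {k : ℕ}
    (Q : Matrix n n ℝ) (θ : n → ℝ)
    (hQ' : Qᵀ * Q = 1)
    (F : ℝ → Matrix n n ℝ)
    (hF : ∀ t, F t = Q * Matrix.diagonal (fun i => Real.cos (t * Real.sqrt (θ i))) * Qᵀ)
    (τ : ℝ)
    (u0 : Matrix n (Fin k) ℝ) (u : ℕ → Matrix n (Fin k) ℝ)
    (hu : ∀ j : ℕ, u j = F (j * τ) * u0)
    (P : Matrix n n ℝ) (hP : P = F τ)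
    (D : ℕ → Matrix (Fin k) (Fin k) ℝ)
    (hD : ∀ j : ℕ, D j = u0ᵀ * u j) :
    ∀ j l : ℕ, 1 ≤ l →
      (u j)ᵀ * (P * u l) =
        (1 / 4 : ℝ) • (D (j + l + 1) + D (((j : ℤ) - l - 1).natAbs)
          + D (j + l - 1) + D (((j : ℤ) - l + 1).natAbs)) := by
  intro j l hl
  obtain rfl : F = cosConj Q (fun i => Real.sqrt (θ i)) := funext hF
  have hgram := snapshot_transpose_mul_snapshot hQ' hu j
  have hidx₁ : ((j : ℤ) - (l + 1 : ℕ)).natAbs = ((j : ℤ) - l - 1).natAbs := by omega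
  have hidx₂ : ((j : ℤ) - (l - 1 : ℕ)).natAbs = ((j : ℤ) - l + 1).natAbs := by omega
  rw [hP, cosConj_mul_snapshot hQ' hu hl, Matrix.mul_smul, Matrix.mul_add, hgram, hgram,
    hidx₁, hidx₂, ← Nat.add_sub_assoc hl, ← add_assoc]
  simp only [← hD]
  module

/-- The stiffness matrix blocks `S_{j,l} = u_jᵀ P u_l` of the snapshots
`u_j = cos(jτ√A) u_0`, with `P = cos(τ√A)`, are determined by the data matrices
`D_j = u_0ᵀ u_j`: for `j ≥ 0` and `l ≥ 1`,
`S_{j,l} = (1/4)(D_{j+l+1} + D_{|j-l-1|} + D_{j+l-1} + D_{|j-l+1|})`. -/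
theorem stmt_4 {n : Type*} [Fintype n] [DecidableEq n] {k : ℕ}
    (A Q : Matrix n n ℝ) (θ : n → ℝ)
    (hQ : Q * Qᵀ = 1) (hQ' : Qᵀ * Q = 1)
    (hθ : ∀ i, 0 ≤ θ i)
    (hA : A = Q * Matrix.diagonal θ * Qᵀ)
    (hApsd : A.PosSemidef)
    (F : ℝ → Matrix n n ℝ)
    (hF : ∀ t, F t = Q * Matrix.diagonal (fun i => Real.cos (t * Real.sqrt (θ i))) * Qᵀ)
    (τ : ℝ) (hτ : 0 < τ)
    (u0 : Matrix n (Fin k) ℝ) (u : ℕ → Matrix n (Fin k) ℝ)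
    (hu : ∀ j : ℕ, u j = F (j * τ) * u0)
    (P : Matrix n n ℝ) (hP : P = F τ)
    (D : ℕ → Matrix (Fin k) (Fin k) ℝ)
    (hD : ∀ j : ℕ, D j = u0ᵀ * u j) :
    ∀ j l : ℕ, 1 ≤ l →
      (u j)ᵀ * (P * u l) =
        (1 / 4 : ℝ) • (D (j + l + 1) + D (((j : ℤ) - l - 1).natAbs)
          + D (j + l - 1) + D (((j : ℤ) - l + 1).natAbs)) :=
  stmt_4_general Q θ hQ' F hF τ u0 u hu P hP D hD
end

section
/- Let R ∈ ℝ^{n×n} be invertible upper triangular, S ∈ ℝ^{n×n} symmetric, and P = R⁻ᵀ S R⁻¹. Suppose the columns r_j = R e_j satisfy 2 P r_j = r_{j+1} + r_{|j-1|} for j = 0, ..., n-2 (with r indices interpreted as columns of R, using r_{|−1|} = r_1, and where r_n := 2Pr_{n-1} - r_{n-2} for the last step). Then P is symmetric tridiagonal, i.e., P_{jl} = 0 whenever |j - l| ≥ 2. -/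
/-!
Since `R` and `R⁻¹` are upper triangular, the entry `(P * R) j m` is a combination of the
`P j k` with `k ≤ m` and conversely, so row `j` of `P` vanishes up to column `l` as soon as row `j`
of `P * R` does. The column `m` of `P * R` is `(r_{m+1} + r_{|m-1|}) / 2`, which vanishes below
row `m + 1` since `R` is upper triangular. Hence `P j l = 0` for `l + 2 ≤ j`, and symmetry of
`P = R⁻ᵀ S R⁻¹` gives the other half.
-/

open Matrix

namespace Matrix

theorem IsSymm.transpose_mul_mul {n : Type*} [Fintype n] {α : Type*} [CommSemiring α]
    {S : Matrix n n α} (hS : S.IsSymm) (A : Matrix n n α) : (Aᵀ * S * A).IsSymm := by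
  simp only [IsSymm, transpose_mul, transpose_transpose, hS.eq, Matrix.mul_assoc]

theorem apply_eq_zero_of_mul_blockTriangular {ι K : Type*} [Fintype ι] [LinearOrder ι]
    [CommRing K] {P R : Matrix ι ι K} (hR : R.BlockTriangular id) (hdet : IsUnit R.det) {j l : ι}
    (h : ∀ m ≤ l, (P * R) j m = 0) : P j l = 0 := by
  have := R.invertibleOfIsUnitDet hdet
  have hRinv : (R⁻¹).BlockTriangular id := blockTriangular_inv_of_blockTriangular hR
  rw [← mul_nonsing_inv_cancel_right R P hdet, mul_apply]
  refine Finset.sum_eq_zero fun m _ => ?_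
  rcases le_or_gt m l with hml | hlm
  · rw [h m hml, zero_mul]
  · rw [hRinv hlm, mul_zero]

theorem mul_apply_eq_zero_of_two_smul_mulVec_eq {K : Type*} [Field K] [NeZero (2 : K)] {n : ℕ}
    {P R : Matrix (Fin n) (Fin n) K} (hR : R.BlockTriangular id) (r : ℕ → Fin n → K)
    (hr : ∀ j (hj : j < n), r j = fun i => R i ⟨j, hj⟩)
    (hrec : ∀ j : ℕ, j + 2 ≤ n →
      (2 : K) • (P *ᵥ r j) = r (j + 1) + r (((j : ℤ) - 1).natAbs))
    {j m : Fin n} (hmj : (m : ℕ) + 2 ≤ j) : (P * R) j m = 0 := by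
  have hcol : r m = fun i => R i m := hr m m.isLt
  have hbelow (k : ℕ) (hk : k < j) : r k j = 0 := by
    rw [hr k (hk.trans j.isLt)]
    exact hR (show (⟨k, _⟩ : Fin n) < j from hk)
  have hrow := congrFun (hrec m (hmj.trans j.isLt.le)) j
  rw [Pi.smul_apply, Pi.add_apply, hbelow _ (by omega), hbelow _ (by omega), add_zero, hcol,
    smul_eq_zero] at hrow
  simpa [two_ne_zero, mulVec, dotProduct, mul_apply] using hrow

end Matrix

/-- Tridiagonal structure of the ROM propagator: if `R` is invertible upper
triangular, `S` symmetric, `P = R⁻ᵀ S R⁻¹`, and the columns `r_j` of `R` satisfy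
`2 P r_j = r_{j+1} + r_{|j-1|}` for `j = 0,…,n-2`, then `P` is (symmetric)
tridiagonal: `P j l = 0` whenever `|j - l| ≥ 2`. -/
theorem stmt_10 {n : ℕ}
    (R S P : Matrix (Fin n) (Fin n) ℝ)
    (hRtri : R.BlockTriangular id) (hRinv : IsUnit R.det)
    (hS : S.IsSymm)
    (hP : P = (R⁻¹)ᵀ * S * R⁻¹)
    (r : ℕ → Fin n → ℝ)
    (hr : ∀ j (hj : j < n), r j = fun i => R i ⟨j, hj⟩)
    (hrec : ∀ j : ℕ, j + 2 ≤ n →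
      (2 : ℝ) • (P *ᵥ r j) = r (j + 1) + r (((j : ℤ) - 1).natAbs)) :
    ∀ j l : Fin n, 2 ≤ |(j : ℤ) - (l : ℤ)| → P j l = 0 := by
  have hsymm : P.IsSymm := hP ▸ hS.transpose_mul_mul _
  have hlower (j l : Fin n) (hlj : (l : ℕ) + 2 ≤ j) : P j l = 0 :=
    apply_eq_zero_of_mul_blockTriangular hRtri hRinv fun m hml =>
      mul_apply_eq_zero_of_two_smul_mulVec_eq hRtri r hr hrec (by omega)
  intro j l hjl
  rcases le_abs'.mp hjl with hle | hge
  · rw [hsymm.apply l j]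
    exact hlower l j (by omega)
  · exact hlower j l (by omega)
end

section
/- Let A be a real symmetric positive semidefinite N×N matrix, u_0 ∈ ℝ^{N×k}, u_j = cos(jτ√A)u_0, and suppose the matrix U = (u_0, ..., u_{n-1}) ∈ ℝ^{N×nk} has full column rank. Write U = VR with VᵀV = I (R block Cholesky square root of M = UᵀU). Define the ROM snapshots û_j = Vᵀ u_j for j = 0,...,n-1. Then the data matrices satisfy D_j := u_0ᵀ u_j = û_0ᵀ û_j for j = 0,...,n-1 (data interpolation). -/
open Matrix

/-- Data interpolation by the ROM: with snapshots `u_j = cos(jτ√A) u_0`, the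
snapshot matrix `U = (u_0,…,u_{n-1})` of full column rank, `U = V R` with
`VᵀV = I`, and ROM snapshots `û_j = Vᵀ u_j`, the data matrices satisfy
`D_j = u_0ᵀ u_j = û_0ᵀ û_j` for `j = 0,…,n-1`. -/
theorem stmt_11 {N : Type*} [Fintype N] [DecidableEq N] {nn k : ℕ}
    (A Q : Matrix N N ℝ) (θ : N → ℝ)
    (hQ : Q * Qᵀ = 1) (hQ' : Qᵀ * Q = 1)
    (hθ : ∀ i, 0 ≤ θ i)
    (hA : A = Q * Matrix.diagonal θ * Qᵀ)
    (hApsd : A.PosSemidef)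
    (F : ℝ → Matrix N N ℝ)
    (hF : ∀ t, F t = Q * Matrix.diagonal (fun i => Real.cos (t * Real.sqrt (θ i))) * Qᵀ)
    (τ : ℝ) (hτ : 0 < τ)
    (u0 : Matrix N (Fin k) ℝ) (u : ℕ → Matrix N (Fin k) ℝ)
    (hu : ∀ j : ℕ, u j = F (j * τ) * u0)
    (U : Matrix N (Fin nn × Fin k) ℝ)
    (hUdef : ∀ i (j : Fin nn) (l : Fin k), U i (j, l) = u j i l)
    (hrank : U.rank = Fintype.card (Fin nn × Fin k))
    (V : Matrix N (Fin nn × Fin k) ℝ) (R : Matrix (Fin nn × Fin k) (Fin nn × Fin k) ℝ)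
    (hV : Vᵀ * V = 1) (hUVR : U = V * R)
    (D : ℕ → Matrix (Fin k) (Fin k) ℝ)
    (hD : ∀ j : ℕ, D j = u0ᵀ * u j) :
    ∀ j : ℕ, j < nn → D j = (Vᵀ * u 0)ᵀ * (Vᵀ * u j) := by
  -- u 0 = u0
  have hu0 : u 0 = u0 := by
    rw [hu 0, hF]
    simp [Matrix.mul_assoc, Matrix.diagonal_one, ← Matrix.mul_assoc, hQ]
  intro j hj
  -- u j = V * (Vᵀ * u j)
  have hcol : u j = V * (Vᵀ * u j) := by
    set Rj : Matrix (Fin nn × Fin k) (Fin k) ℝ := fun p l => R p (⟨j, hj⟩, l) with hRj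
    have h1 : u j = V * Rj := by
      ext i l
      have := hUdef i ⟨j, hj⟩ l
      rw [hUVR] at this
      rw [Matrix.mul_apply]
      simpa [Matrix.mul_apply, hRj] using this.symm
    rw [h1, ← Matrix.mul_assoc Vᵀ V, hV, Matrix.one_mul]
  rw [hD, Matrix.transpose_mul, Matrix.transpose_transpose, Matrix.mul_assoc, ← hcol, hu0]
end

section
/- In the setting of the previous statement (U = VR full rank, û_j = Vᵀu_j for j ≤ n-1, D_j = u_0ᵀu_j), the later data matrices are also determined by the ROM: D_{n-1+j} = 2 û_{n-1}ᵀ û_j − D_{n-1-j} for j = 1, ..., n-1. -/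
/-!
Since `F t = Q diag(cos (t √θᵢ)) Qᵀ` with `Qᵀ Q = 1`, the product formula
`cos a cos b = ½ (cos (a + b) + cos (a - b))` gives `F a F b = ½ (F (a + b) + F (a - b))`;
as `F` is symmetric, `u_aᵀ u_b = u₀ᵀ F(aτ) F(bτ) u₀ = ½ (D_{a+b} + D_{a-b})` for `b ≤ a`. The
snapshots `u_j`, `j < n`, are columns of `U = V R`, hence fixed by the projection `V Vᵀ`, so
`û_{n-1}ᵀ û_j = u_{n-1}ᵀ V Vᵀ u_j = u_{n-1}ᵀ u_j`.
-/

open Matrix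

section CosineFamily

variable {N : Type*} [Fintype N]

theorem transpose_mul_of_cosine_equation {K : Type*} {F : ℝ → Matrix N N ℝ}
    (hsymm : ∀ t, (F t)ᵀ = F t) (hmul : ∀ a b, F a * F b = (2 : ℝ)⁻¹ • (F (a + b) + F (a - b)))
    (u₀ : Matrix N K ℝ) (a b : ℝ) :
    (F a * u₀)ᵀ * (F b * u₀) = (2 : ℝ)⁻¹ • (u₀ᵀ * (F (a + b) * u₀) + u₀ᵀ * (F (a - b) * u₀)) := by
  rw [transpose_mul, hsymm, Matrix.mul_assoc, ← Matrix.mul_assoc (F a), hmul, Matrix.smul_mul,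
    Matrix.mul_smul, Matrix.add_mul, Matrix.mul_add]

variable [DecidableEq N]

theorem diagonal_cos_mul_diagonal_cos_s12 (ω : N → ℝ) (a b : ℝ) :
    diagonal (fun i => Real.cos (a * ω i)) * diagonal (fun i => Real.cos (b * ω i)) =
      (2 : ℝ)⁻¹ • (diagonal (fun i => Real.cos ((a + b) * ω i)) +
        diagonal (fun i => Real.cos ((a - b) * ω i))) := by
  rw [diagonal_mul_diagonal, diagonal_add, ← diagonal_smul]
  congr 1
  funext i
  simp only [Pi.smul_apply, smul_eq_mul, add_mul, sub_mul, Real.cos_add, Real.cos_sub]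
  ring

theorem conj_mul_conj {Q : Matrix N N ℝ} (hQ : Qᵀ * Q = 1) (X Y : Matrix N N ℝ) :
    Q * X * Qᵀ * (Q * Y * Qᵀ) = Q * (X * Y) * Qᵀ := by
  simp only [Matrix.mul_assoc]
  rw [← Matrix.mul_assoc Qᵀ, hQ, Matrix.one_mul]

theorem cosFamily_mul {Q : Matrix N N ℝ} (hQ : Qᵀ * Q = 1) {ω : N → ℝ} {F : ℝ → Matrix N N ℝ}
    (hF : ∀ t, F t = Q * diagonal (fun i => Real.cos (t * ω i)) * Qᵀ) (a b : ℝ) :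
    F a * F b = (2 : ℝ)⁻¹ • (F (a + b) + F (a - b)) := by
  rw [hF, hF, hF, hF, conj_mul_conj hQ, diagonal_cos_mul_diagonal_cos_s12, Matrix.mul_smul,
    Matrix.smul_mul, Matrix.mul_add, Matrix.add_mul]

theorem cosFamily_transpose {Q : Matrix N N ℝ} {ω : N → ℝ} {F : ℝ → Matrix N N ℝ}
    (hF : ∀ t, F t = Q * diagonal (fun i => Real.cos (t * ω i)) * Qᵀ) (t : ℝ) :
    (F t)ᵀ = F t := by
  rw [hF, transpose_mul, transpose_mul, transpose_transpose, diagonal_transpose,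
    Matrix.mul_assoc]

end CosineFamily

section Projection

variable {N r : Type*} [Fintype N] [Fintype r] [DecidableEq r]

theorem mul_transpose_mul_mul_self {V : Matrix N r ℝ} (hV : Vᵀ * V = 1) {K : Type*}
    (W : Matrix r K ℝ) : V * Vᵀ * (V * W) = V * W := by
  rw [Matrix.mul_assoc, ← Matrix.mul_assoc Vᵀ, hV, Matrix.one_mul]

theorem transpose_mul_transpose_mul_of_mem_span {V : Matrix N r ℝ} (hV : Vᵀ * V = 1)
    {K L : Type*} (x : Matrix N K ℝ) (W : Matrix r L ℝ) :
    (Vᵀ * x)ᵀ * (Vᵀ * (V * W)) = xᵀ * (V * W) := by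
  rw [transpose_mul, transpose_transpose, Matrix.mul_assoc, ← Matrix.mul_assoc V,
    mul_transpose_mul_mul_self hV]

end Projection

theorem stmt_12_general {N : Type*} [Fintype N] [DecidableEq N] {nn k : ℕ}
    (Q : Matrix N N ℝ) (θ : N → ℝ)
    (hQ' : Qᵀ * Q = 1)
    (F : ℝ → Matrix N N ℝ)
    (hF : ∀ t, F t = Q * Matrix.diagonal (fun i => Real.cos (t * Real.sqrt (θ i))) * Qᵀ)
    (τ : ℝ)
    (u0 : Matrix N (Fin k) ℝ) (u : ℕ → Matrix N (Fin k) ℝ)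
    (hu : ∀ j : ℕ, u j = F (j * τ) * u0)
    (U : Matrix N (Fin nn × Fin k) ℝ)
    (hUdef : ∀ i (j : Fin nn) (l : Fin k), U i (j, l) = u j i l)
    (V : Matrix N (Fin nn × Fin k) ℝ) (R : Matrix (Fin nn × Fin k) (Fin nn × Fin k) ℝ)
    (hV : Vᵀ * V = 1) (hUVR : U = V * R)
    (D : ℕ → Matrix (Fin k) (Fin k) ℝ)
    (hD : ∀ j : ℕ, D j = u0ᵀ * u j) :
    ∀ j : ℕ, 1 ≤ j → j ≤ nn - 1 →
      D (nn - 1 + j) =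
        (2 : ℝ) • ((Vᵀ * u (nn - 1))ᵀ * (Vᵀ * u j)) - D (nn - 1 - j) := by
  intro j _ hj
  have hsnapshot : ∀ a b : ℕ, b ≤ a → (u a)ᵀ * u b = (2 : ℝ)⁻¹ • (D (a + b) + D (a - b)) := by
    intro a b hba
    rw [hu, hu, transpose_mul_of_cosine_equation (cosFamily_transpose hF) (cosFamily_mul hQ' hF),
      hD, hD, hu, hu, ← add_mul, ← sub_mul, Nat.cast_add, Nat.cast_sub hba]
  have hcolumn : u j = V * R.submatrix id (fun l => ((⟨j, by omega⟩ : Fin nn), l)) := by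
    ext i l
    rw [← hUdef i ⟨j, by omega⟩ l, hUVR]
    rfl
  rw [hcolumn, transpose_mul_transpose_mul_of_mem_span hV, ← hcolumn,
    hsnapshot _ _ hj, smul_smul]
  norm_num

/-- Later data matrices are determined by the ROM: in the setting of data
interpolation (`U = V R` full rank, `û_j = Vᵀ u_j`, `D_j = u_0ᵀ u_j`),
`D_{n-1+j} = 2 û_{n-1}ᵀ û_j − D_{n-1-j}` for `j = 1,…,n-1`. -/
theorem stmt_12 {N : Type*} [Fintype N] [DecidableEq N] {nn k : ℕ}
    (A Q : Matrix N N ℝ) (θ : N → ℝ)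
    (hQ : Q * Qᵀ = 1) (hQ' : Qᵀ * Q = 1)
    (hθ : ∀ i, 0 ≤ θ i)
    (hA : A = Q * Matrix.diagonal θ * Qᵀ)
    (hApsd : A.PosSemidef)
    (F : ℝ → Matrix N N ℝ)
    (hF : ∀ t, F t = Q * Matrix.diagonal (fun i => Real.cos (t * Real.sqrt (θ i))) * Qᵀ)
    (τ : ℝ) (hτ : 0 < τ)
    (u0 : Matrix N (Fin k) ℝ) (u : ℕ → Matrix N (Fin k) ℝ)
    (hu : ∀ j : ℕ, u j = F (j * τ) * u0)
    (U : Matrix N (Fin nn × Fin k) ℝ)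
    (hUdef : ∀ i (j : Fin nn) (l : Fin k), U i (j, l) = u j i l)
    (hrank : U.rank = Fintype.card (Fin nn × Fin k))
    (V : Matrix N (Fin nn × Fin k) ℝ) (R : Matrix (Fin nn × Fin k) (Fin nn × Fin k) ℝ)
    (hV : Vᵀ * V = 1) (hUVR : U = V * R)
    (D : ℕ → Matrix (Fin k) (Fin k) ℝ)
    (hD : ∀ j : ℕ, D j = u0ᵀ * u j) :
    ∀ j : ℕ, 1 ≤ j → j ≤ nn - 1 →
      D (nn - 1 + j) =
        (2 : ℝ) • ((Vᵀ * u (nn - 1))ᵀ * (Vᵀ * u j)) - D (nn - 1 - j) :=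
  stmt_12_general Q θ hQ' F hF τ u0 u hu U hUdef V R hV hUVR D hD
end
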